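/- Let T = Σ_{i=1}^I d_i V_i with d_i ∈ ℝ and V_i independent {-1,1}-valued r.v.'s from Rosenbaum's model with parameter γ = log Γ and arbitrary w ∈ [-1,1]^I, and let T^+ denote the corresponding sum when w = (sgn(d_1),...,sgn(d_I)). Then for every t ∈ ℝ, P(T ≥ t) ≤ P(T^+ ≥ t). -/

import Mathlib

/-!
Both probabilities are finite sums, over sign patterns `e`, of the indicator of
`t ≤ ∑ i, d i * (±1)` weighted by a product of independent coin probabilities; the head
probability of coin `i` is `sigmoid (γ * w i)`. Such a sum is affine in each single coin
probability, with slope of the sign of `d i`, because the indicator is monotone in coordinate `i`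
in the direction of `sign (d i)`. Replacing `w i` by `sign (d i)` moves `sigmoid (γ * w i)` in that
same direction, so changing the coins one at a time never decreases the sum.
-/

open MeasureTheory ProbabilityTheory Real Finset Function

noncomputable section

def coinWeight (p : ℝ) (b : Bool) : ℝ := if b then p else 1 - p

@[simp] lemma coinWeight_true (p : ℝ) : coinWeight p true = p := rfl

@[simp] lemma coinWeight_false (p : ℝ) : coinWeight p false = 1 - p := rfl

lemma coinWeight_nonneg {p : ℝ} (hp : p ∈ Set.Icc 0 1) (b : Bool) : 0 ≤ coinWeight p b := by
  cases b <;> simp [hp.1, hp.2]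

def spin (b : Bool) : ℝ := if b then 1 else -1

lemma exp_half_div_eq_sigmoid (u : ℝ) :
    exp (u / 2) / (exp (u / 2) + exp (-u / 2)) = sigmoid u := by
  rw [sigmoid_def, div_eq_iff (by positivity), ← div_eq_inv_mul, eq_div_iff (by positivity),
    mul_add, mul_one, ← exp_add]
  ring_nf

section CoinProducts

variable {ι : Type*} [Fintype ι]

def coinProductWeight (p : ι → ℝ) (e : ι → Bool) : ℝ :=
  ∏ i, coinWeight (p i) (e i)

lemma coinProductWeight_nonneg {p : ι → ℝ} (hp : ∀ i, p i ∈ Set.Icc 0 1) (e : ι → Bool) :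
    0 ≤ coinProductWeight p e :=
  prod_nonneg fun i _ => coinWeight_nonneg (hp i) (e i)

variable [DecidableEq ι]

omit [Fintype ι] in
lemma update_funSplitAt_symm (j : ι) (b b' : Bool) (r : {i // i ≠ j} → Bool) :
    update ((Equiv.funSplitAt j Bool).symm (b, r)) j b'
      = (Equiv.funSplitAt j Bool).symm (b', r) := by
  ext i
  by_cases hi : i = j
  · subst hi; simp
  · simp [hi]

lemma coinProductWeight_funSplitAt_symm (p : ι → ℝ) (j : ι) (b : Bool)
    (r : {i // i ≠ j} → Bool) :
    coinProductWeight p ((Equiv.funSplitAt j Bool).symm (b, r))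
      = coinWeight (p j) b * ∏ i : {i // i ≠ j}, coinWeight (p i) (r i) := by
  rw [coinProductWeight, Fintype.prod_eq_mul_prod_subtype_ne _ j]
  congr 1
  · simp
  · exact prod_congr rfl fun i _ => by simp [i.2]

lemma sum_mul_coinProductWeight_le_update (g : (ι → Bool) → ℝ) {p : ι → ℝ}
    (hp : ∀ i, p i ∈ Set.Icc 0 1) (j : ι) (x : ℝ)
    (h : ∀ e, 0 ≤ (x - p j) * (g (update e j true) - g (update e j false))) :
    ∑ e, g e * coinProductWeight p e ≤ ∑ e, g e * coinProductWeight (update p j x) e := by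
  simp only [← (Equiv.funSplitAt j Bool).symm.sum_comp, Fintype.sum_prod_type,
    Fintype.sum_bool, coinProductWeight_funSplitAt_symm, update_self, ← sum_add_distrib]
  refine sum_le_sum fun r _ => ?_
  have hrest : ∏ i : {i // i ≠ j}, coinWeight (update p j x i) (r i)
      = ∏ i : {i // i ≠ j}, coinWeight (p i) (r i) :=
    prod_congr rfl fun i _ => by rw [update_of_ne i.2]
  have hrest_nonneg : 0 ≤ ∏ i : {i // i ≠ j}, coinWeight (p i) (r i) :=
    prod_nonneg fun i _ => coinWeight_nonneg (hp i) (r i)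
  have hslope := h ((Equiv.funSplitAt j Bool).symm (true, r))
  simp only [update_funSplitAt_symm] at hslope
  rw [hrest, coinWeight_true, coinWeight_true, coinWeight_false, coinWeight_false]
  linear_combination mul_nonneg hslope hrest_nonneg

theorem sum_mul_coinProductWeight_le (g : (ι → Bool) → ℝ) {p q : ι → ℝ}
    (hp : ∀ i, p i ∈ Set.Icc 0 1) (hq : ∀ i, q i ∈ Set.Icc 0 1)
    (h : ∀ j e, 0 ≤ (q j - p j) * (g (update e j true) - g (update e j false))) :
    ∑ e, g e * coinProductWeight p e ≤ ∑ e, g e * coinProductWeight q e := by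
  suffices ∀ s : Finset ι, ∑ e, g e * coinProductWeight p e
      ≤ ∑ e, g e * coinProductWeight (s.piecewise q p) e by
    simpa using this univ
  intro s
  induction s using Finset.induction_on with
  | empty => simp
  | insert j s hj ih =>
    rw [piecewise_insert]
    refine ih.trans (sum_mul_coinProductWeight_le_update g
      (fun i => piecewise_cases s q p (· ∈ Set.Icc 0 1) (hq i) (hp i)) j (q j) fun e => ?_)
    simpa [piecewise_eq_of_notMem _ _ _ hj] using h j e

section Independence

variable {Ω : Type*} [MeasurableSpace Ω] {μ : Measure Ω} [IsProbabilityMeasure μ]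

theorem measure_setOf_coins_eq {E : ι → Ω → Bool} (hE : ∀ i, Measurable (E i))
    (hind : iIndepFun E μ) {p : ι → ℝ} (hp01 : ∀ i, p i ∈ Set.Icc 0 1)
    (hp : ∀ i, μ {ω | E i ω = true} = ENNReal.ofReal (p i))
    (P : (ι → Bool) → Prop) [DecidablePred P] :
    μ {ω | P (fun i => E i ω)}
      = ENNReal.ofReal (∑ e, if P e then coinProductWeight p e else 0) := by
  have marginal : ∀ i b, μ (E i ⁻¹' {b}) = ENNReal.ofReal (coinWeight (p i) b) := by
    intro i b
    cases b
    · have hcompl : E i ⁻¹' {false} = {ω | E i ω = true}ᶜ := by ext; simp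
      have htrue : MeasurableSet {ω | E i ω = true} := hE i (measurableSet_singleton true)
      rw [hcompl, prob_compl_eq_one_sub htrue, hp i, coinWeight_false,
        ENNReal.ofReal_sub _ (hp01 i).1, ENNReal.ofReal_one]
    · exact hp i
  have fiber : ∀ e, μ ((fun ω i => E i ω) ⁻¹' {e}) = ENNReal.ofReal (coinProductWeight p e) := by
    intro e
    have hfiber : (fun ω i => E i ω) ⁻¹' {e} = ⋂ i ∈ (univ : Finset ι), E i ⁻¹' {e i} := by
      ext; simp [funext_iff]
    rw [hfiber, hind.measure_inter_preimage_eq_mul univ fun i _ => measurableSet_singleton (e i),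
      coinProductWeight, ENNReal.ofReal_prod_of_nonneg fun i _ => coinWeight_nonneg (hp01 i) _]
    simp only [marginal]
  have hmeas : Measurable fun ω i => E i ω := measurable_pi_lambda _ hE
  rw [← sum_filter, ENNReal.ofReal_sum_of_nonneg fun e _ => coinProductWeight_nonneg hp01 e]
  simp only [← fiber]
  rw [sum_measure_preimage_singleton _ fun e _ => hmeas (measurableSet_singleton e)]
  congr 1
  ext; simp

theorem measure_le_sum_mul_spins_eq {V : ι → Ω → ℝ} (hV : ∀ i, Measurable (V i))
    (hval : ∀ i ω, V i ω = 1 ∨ V i ω = -1) (hind : iIndepFun V μ) {p : ι → ℝ}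
    (hp01 : ∀ i, p i ∈ Set.Icc 0 1) (hp : ∀ i, μ {ω | V i ω = 1} = ENNReal.ofReal (p i))
    (d : ι → ℝ) (t : ℝ) :
    μ {ω | t ≤ ∑ i, d i * V i ω}
      = ENNReal.ofReal (∑ e, if t ≤ ∑ i, d i * spin (e i) then coinProductWeight p e else 0) := by
  have hone : Measurable fun x : ℝ => decide (x = 1) :=
    measurable_to_bool <| by simp [Set.preimage]
  set E : ι → Ω → Bool := fun i ω => decide (V i ω = 1)
  have hVE : ∀ i ω, V i ω = spin (E i ω) := fun i ω => by
    rcases hval i ω with h | h <;> simp [E, spin, h]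
  have hpE : ∀ i, μ {ω | E i ω = true} = ENNReal.ofReal (p i) := by simpa [E] using hp
  simp only [hVE]
  exact measure_setOf_coins_eq (fun i => hone.comp (hV i))
    (hind.comp (fun _ x => decide (x = 1)) fun _ => hone) hp01 hpE
    (fun e => t ≤ ∑ i, d i * spin (e i))

end Independence

lemma sum_mul_spin_update_true_sub_false (d : ι → ℝ) (e : ι → Bool) (j : ι) :
    ∑ i, d i * spin (update e j true i) - ∑ i, d i * spin (update e j false i) = 2 * d j := by
  rw [← sum_sub_distrib, sum_eq_single j (fun i _ hi => by simp [update_of_ne hi]) (by simp)]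
  simp only [update_self, spin, if_true, Bool.false_eq_true, if_false]
  ring

lemma sigmoid_sign_sub_mul_threshold_nonneg {γ w : ℝ} (hγ : 0 ≤ γ) (hw : w ∈ Set.Icc (-1) 1)
    (d : ι → ℝ) (t : ℝ) (e : ι → Bool) (j : ι) :
    0 ≤ (sigmoid (γ * sign (d j)) - sigmoid (γ * w)) *
      ((if t ≤ ∑ i, d i * spin (update e j true i) then 1 else 0)
        - (if t ≤ ∑ i, d i * spin (update e j false i) then 1 else 0)) := by
  have hdiff := sum_mul_spin_update_true_sub_false d e j
  rcases lt_trichotomy (d j) 0 with hd | hd | hd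
  · rw [sign_of_neg hd]
    refine mul_nonneg_of_nonpos_of_nonpos (sub_nonpos.2 (sigmoid_le (by nlinarith [hw.1])))
      (sub_nonpos.2 ?_)
    split_ifs <;> linarith
  · rw [show ∑ i, d i * spin (update e j true i) = ∑ i, d i * spin (update e j false i) by
      linarith, sub_self, mul_zero]
  · rw [sign_of_pos hd]
    refine mul_nonneg (sub_nonneg.2 (sigmoid_le (by nlinarith [hw.2]))) (sub_nonneg.2 ?_)
    split_ifs <;> linarith

end CoinProducts

end

/-- Let `T = Σ d_i V_i` under Rosenbaum's model with arbitrary `w ∈ [-1,1]^I`, and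
`T^+` the corresponding sum when `w = (sgn d_1, ..., sgn d_I)`.
Then for every `t`, `P(T ≥ t) ≤ P(T^+ ≥ t)`. -/
theorem stmt6 {Ω Ω' : Type*} [MeasurableSpace Ω] [MeasurableSpace Ω']
    (μ : Measure Ω) (ν : Measure Ω') [IsProbabilityMeasure μ] [IsProbabilityMeasure ν]
    (I : ℕ) (d : Fin I → ℝ) (γ : ℝ) (hγ : 0 ≤ γ)
    (w : Fin I → ℝ) (hw : ∀ i, w i ∈ Set.Icc (-1 : ℝ) 1)
    (V : Fin I → Ω → ℝ) (Vplus : Fin I → Ω' → ℝ)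
    (hmeas : ∀ i, Measurable (V i)) (hmeas' : ∀ i, Measurable (Vplus i))
    (hval : ∀ i ω, V i ω = 1 ∨ V i ω = -1) (hval' : ∀ i ω, Vplus i ω = 1 ∨ Vplus i ω = -1)
    (hind : iIndepFun V μ)
    (hind' : iIndepFun Vplus ν)
    (hp : ∀ i, μ {ω | V i ω = 1}
        = ENNReal.ofReal (Real.exp (γ * w i / 2) /
            (Real.exp (γ * w i / 2) + Real.exp (-(γ * w i) / 2))))
    (hp' : ∀ i, ν {ω | Vplus i ω = 1}
        = ENNReal.ofReal (Real.exp (γ * Real.sign (d i) / 2) /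
            (Real.exp (γ * Real.sign (d i) / 2) + Real.exp (-(γ * Real.sign (d i)) / 2)))) :
    ∀ t : ℝ, μ {ω | t ≤ ∑ i, d i * V i ω} ≤ ν {ω | t ≤ ∑ i, d i * Vplus i ω} := by
  intro t
  have hq : ∀ i, sigmoid (γ * w i) ∈ Set.Icc 0 1 := fun i => ⟨sigmoid_nonneg _, sigmoid_le_one _⟩
  have hr : ∀ i, sigmoid (γ * sign (d i)) ∈ Set.Icc 0 1 :=
    fun i => ⟨sigmoid_nonneg _, sigmoid_le_one _⟩
  rw [measure_le_sum_mul_spins_eq hmeas hval hind hq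
      (fun i => by rw [hp i, exp_half_div_eq_sigmoid]) d t,
    measure_le_sum_mul_spins_eq hmeas' hval' hind' hr
      (fun i => by rw [hp' i, exp_half_div_eq_sigmoid]) d t]
  refine ENNReal.ofReal_le_ofReal ?_
  simpa only [boole_mul] using sum_mul_coinProductWeight_le
    (fun e => if t ≤ ∑ i, d i * spin (e i) then 1 else 0) hq hr
    fun j e => sigmoid_sign_sub_mul_threshold_nonneg hγ (hw j) d t e j
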